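/- arXiv:0802.4304 — 2 statements merged into one kernel-verified Lean document; each statement's English description precedes it below -/
import Mathlib

section
/- Let G be a group acting on a uniform space X. The projection p: X → X/G has the chain lifting property (for every entourage E of X there is an entourage F of X such that any p(F)-chain in X/G starting from p(x₀) lifts to an E-chain in X starting from x₀) if and only if the action is neutral (for every entourage E of X there is an entourage F of X such that (x, h·y) ∈ F for some h ∈ G implies there exists g ∈ G with (g·x, y) ∈ E). -/
open scoped Uniformity

/-- An `E`-chain: consecutive members of the list are `E`-related. -/
def ChainIn {α : Type*} (E : Set (α × α)) (c : List α) : Prop :=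
  c.Chain' fun a b => (a, b) ∈ E

/-- The image `f(E)` of a relation under a map. -/
def imgRel {α β : Type*} (f : α → β) (E : Set (α × α)) : Set (β × β) :=
  Prod.map f f '' E

/-- The orbit projection `p : X → X/G`. -/
def proj (G X : Type*) [Group G] [MulAction G X] :
    X → Quotient (MulAction.orbitRel G X) :=
  Quotient.mk (MulAction.orbitRel G X)

/-- `G_F`: the subgroup of `G` generated by `S_F = {h | (x, h • x) ∈ F for some x}`. -/
def GF (G : Type*) {X : Type*} [Group G] [MulAction G X] (F : Set (X × X)) : Subgroup G :=
  Subgroup.closure {h : G | ∃ x : X, (x, h • x) ∈ F}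

/-- Chain lifting property for `f : X → Y`: for every (symmetric) entourage `E` of `X`
there is an entourage `F` such that every `f(F)`-chain starting at `f x₀` lifts to an
`E`-chain starting at `x₀`. -/
def HasChainLifting {X Y : Type*} [UniformSpace X] (f : X → Y) : Prop :=
  ∀ E ∈ 𝓤 X, SetRel.IsSymm E → ∃ F ∈ 𝓤 X, SetRel.IsSymm F ∧
    ∀ (x₀ : X) (d : List Y), ChainIn (imgRel f F) d → d.head? = some (f x₀) →
      ∃ c : List X, ChainIn E c ∧ c.head? = some x₀ ∧ c.map f = d

/-- Uniqueness of chain lifts: there is an entourage `F` such that two `F`-chains with the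
same origin and the same image are equal. -/
def HasUniqueChainLifts {X Y : Type*} [UniformSpace X] (f : X → Y) : Prop :=
  ∃ F ∈ 𝓤 X, SetRel.IsSymm F ∧
    ∀ α β : List X, ChainIn F α → ChainIn F β →
      α.head? = β.head? → α.map f = β.map f → α = β

/-- Approximate uniqueness of chain lifts: for every entourage `E` there is an entourage `F`
such that two `F`-chains with the same origin and the same image are `E`-close. -/
def HasApproxUniqueChainLifts {X Y : Type*} [UniformSpace X] (f : X → Y) : Prop :=
  ∀ E ∈ 𝓤 X, SetRel.IsSymm E → ∃ F ∈ 𝓤 X, SetRel.IsSymm F ∧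
    ∀ α β : List X, ChainIn F α → ChainIn F β →
      α.head? = β.head? → α.map f = β.map f →
        List.Forall₂ (fun a b => (a, b) ∈ E) α β

/-- Neutral action. -/
def Neutral (G X : Type*) [Group G] [MulAction G X] [UniformSpace X] : Prop :=
  ∀ E ∈ 𝓤 X, SetRel.IsSymm E → ∃ F ∈ 𝓤 X, SetRel.IsSymm F ∧
    ∀ (x y : X) (h : G), (x, h • y) ∈ F → ∃ g : G, (g • x, y) ∈ E

/-- Uniformly properly discontinuous action. -/
def UnifProperlyDiscontinuous (G X : Type*) [Group G] [MulAction G X] [UniformSpace X] : Prop :=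
  ∃ E ∈ 𝓤 X, SetRel.IsSymm E ∧ ∀ (x : X) (g : G), (x, g • x) ∈ E → g = 1

/-- Equicontinuous action. -/
def EquicontinuousAction (G X : Type*) [Group G] [MulAction G X] [UniformSpace X] : Prop :=
  ∀ E ∈ 𝓤 X, ∃ F ∈ 𝓤 X, ∀ (g : G) (x y : X), (x, y) ∈ F → (g • x, g • y) ∈ E

/-- Small scale uniformly continuous action. -/
def SSUnifCont (G X : Type*) [Group G] [MulAction G X] [UniformSpace X] : Prop :=
  ∀ E ∈ 𝓤 X, SetRel.IsSymm E → ∃ F ∈ 𝓤 X, SetRel.IsSymm F ∧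
    ∀ g ∈ GF G F, {q : X × X | (g • q.1, g • q.2) ∈ E} ∈ 𝓤 X

/-- Small scale uniformly equicontinuous action. -/
def SSUnifEquicont (G X : Type*) [Group G] [MulAction G X] [UniformSpace X] : Prop :=
  ∀ E ∈ 𝓤 X, SetRel.IsSymm E → ∃ F ∈ 𝓤 X, SetRel.IsSymm F ∧
    ∀ g ∈ GF G F, ∀ x y : X, (x, y) ∈ F → (g • x, g • y) ∈ E

/-- Small scale bounded orbits: the orbits of `G_F` are `E`-bounded. -/
def SSBoundedOrbits (G X : Type*) [Group G] [MulAction G X] [UniformSpace X] : Prop :=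
  ∀ E ∈ 𝓤 X, SetRel.IsSymm E → ∃ F ∈ 𝓤 X, SetRel.IsSymm F ∧
    ∀ x : X, ∀ g ∈ GF G F, ∀ g' ∈ GF G F, (g • x, g' • x) ∈ E

/-- Chain connected uniform space. -/
def ChainConnectedU (X : Type*) [UniformSpace X] : Prop :=
  ∀ E ∈ 𝓤 X, SetRel.IsSymm E → ∀ x y : X,
    ∃ c : List X, ChainIn E c ∧ c.head? = some x ∧ c.getLast? = some y

/-! Chain lifting is equivalent to lifting single steps: a lift of a chain is built one step at a
time, and a chain of length two is a single step. For the orbit projection, the points over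
`p a` are the `x` with `a = h • x`, and a lift from `x` of an `F`-step `p a → p b` is a point
`g • b` with `(x, g • b) ∈ E`; up to the symmetry of `E` and `F` this is neutrality. -/

def LiftsSteps {X Y : Type*} (f : X → Y) (E F : Set (X × X)) : Prop :=
  ∀ ⦃a b : X⦄, (a, b) ∈ F → ∀ x, f x = f a → ∃ x', (x, x') ∈ E ∧ f x' = f b

section ChainLifting

variable {X Y : Type*} {f : X → Y} {E F : Set (X × X)}

lemma mem_imgRel_iff {u v : Y} :
    (u, v) ∈ imgRel f F ↔ ∃ a b, (a, b) ∈ F ∧ f a = u ∧ f b = v := by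
  simp [imgRel, Prod.ext_iff]

lemma LiftsSteps.exists_chainIn_cons (h : LiftsSteps f E F) :
    ∀ (t : List Y) (x₀ : X), ChainIn (imgRel f F) (f x₀ :: t) →
      ∃ c : List X, ChainIn E (x₀ :: c) ∧ c.map f = t
  | [], x₀, _ => ⟨[], List.isChain_singleton x₀, rfl⟩
  | b :: t, x₀, hd => by
    obtain ⟨hstep, ht⟩ := List.isChain_cons_cons.mp hd
    obtain ⟨a, a', haa', hfa, rfl⟩ := mem_imgRel_iff.mp hstep
    obtain ⟨x₁, hx₀x₁, hfx₁⟩ := h haa' x₀ hfa.symm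
    rw [← hfx₁] at ht
    obtain ⟨c, hc, rfl⟩ := h.exists_chainIn_cons t x₁ ht
    exact ⟨x₁ :: c, List.isChain_cons_cons.mpr ⟨hx₀x₁, hc⟩, by simp [hfx₁]⟩

lemma LiftsSteps.exists_chainIn_lift (h : LiftsSteps f E F) (x₀ : X) (d : List Y)
    (hd : ChainIn (imgRel f F) d) (hhead : d.head? = some (f x₀)) :
    ∃ c : List X, ChainIn E c ∧ c.head? = some x₀ ∧ c.map f = d := by
  obtain ⟨t, rfl⟩ : ∃ t, d = f x₀ :: t := List.head?_eq_some_iff.mp hhead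
  obtain ⟨c, hc, rfl⟩ := h.exists_chainIn_cons t x₀ hd
  exact ⟨x₀ :: c, hc, rfl, rfl⟩

lemma liftsSteps_of_exists_chainIn_lift
    (h : ∀ (x₀ : X) (d : List Y), ChainIn (imgRel f F) d → d.head? = some (f x₀) →
      ∃ c : List X, ChainIn E c ∧ c.head? = some x₀ ∧ c.map f = d) :
    LiftsSteps f E F := by
  intro a b hab x hx
  have hpair : ChainIn (imgRel f F) [f x, f b] :=
    List.isChain_pair.mpr (mem_imgRel_iff.mpr ⟨a, b, hab, hx.symm, rfl⟩)
  obtain ⟨c, hc, hhead, hmap⟩ := h x _ hpair rfl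
  obtain ⟨x', rfl, hx'⟩ : ∃ x', c = [x, x'] ∧ f x' = f b := by
    rcases c with _ | ⟨_, _ | ⟨x', _ | _⟩⟩ <;> simp_all
  exact ⟨x', List.isChain_pair.mp hc, hx'⟩

theorem hasChainLifting_iff_liftsSteps [UniformSpace X] :
    HasChainLifting f ↔
      ∀ E ∈ 𝓤 X, SetRel.IsSymm E → ∃ F ∈ 𝓤 X, SetRel.IsSymm F ∧ LiftsSteps f E F :=
  forall₃_congr fun _ _ _ => exists_congr fun _ => and_congr_right fun _ => and_congr_right fun _ =>
    ⟨liftsSteps_of_exists_chainIn_lift, LiftsSteps.exists_chainIn_lift⟩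

end ChainLifting

section OrbitProjection

variable {G X : Type*} [Group G] [MulAction G X]

lemma proj_eq_proj_iff {a b : X} : proj G X a = proj G X b ↔ ∃ g : G, g • b = a := by
  simp [proj, Quotient.eq, MulAction.orbitRel_apply, MulAction.mem_orbit_iff]

lemma liftsSteps_proj_iff {E F : Set (X × X)} (hE : SetRel.IsSymm E) (hF : SetRel.IsSymm F) :
    LiftsSteps (proj G X) E F ↔
      ∀ (x y : X) (h : G), (x, h • y) ∈ F → ∃ g : G, (g • x, y) ∈ E := by
  constructor
  · intro hlift x y h hxy
    obtain ⟨x', hyx', hx'⟩ :=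
      hlift (hF.symm _ _ hxy) y (proj_eq_proj_iff.mpr ⟨h, rfl⟩).symm
    obtain ⟨g, rfl⟩ := proj_eq_proj_iff.mp hx'
    exact ⟨g, hE.symm _ _ hyx'⟩
  · intro hN a b hab x hx
    obtain ⟨h, rfl⟩ := proj_eq_proj_iff.mp hx.symm
    obtain ⟨g, hgb⟩ := hN b x h (hF.symm _ _ hab)
    exact ⟨g • b, hE.symm _ _ hgb, proj_eq_proj_iff.mpr ⟨g, rfl⟩⟩

end OrbitProjection

/-- The projection `p : X → X/G` has the chain lifting property iff the action is neutral. -/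
theorem stmt0 (G X : Type*) [Group G] [MulAction G X] [UniformSpace X] :
    HasChainLifting (proj G X) ↔ Neutral G X := by
  rw [hasChainLifting_iff_liftsSteps]
  exact forall₃_congr fun E _ hE => exists_congr fun F => and_congr_right fun _ =>
    and_congr_right fun hF => liftsSteps_proj_iff hE hF
end

section
/- Let G be the free group on countably many generators x₁, x₂, … and let G_k be the subgroup generated by {xₙ : n ≥ k}. Equip the set X = G with the uniform structure generated by the entourages E_k = {(x,y) : x·y⁻¹ ∈ G_k}. Then the left multiplication action of G on X is small scale uniformly equicontinuous but not equicontinuous. -/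
/-- `G`: the free group on generators `x₁, x₂, …` (indexed by `ℕ`, generators `xₙ`, `n ≥ 1`). -/
abbrev FG := FreeGroup ℕ

/-- `G_k`: the subgroup generated by the generators `xₙ` with `n ≥ k`. -/
def Gk (k : ℕ) : Subgroup FG :=
  Subgroup.closure {g : FG | ∃ n, k ≤ n ∧ g = FreeGroup.of n}

/-- The basic entourage `E_k = {(x,y) | x·y⁻¹ ∈ G_k}`. -/
def Ek (k : ℕ) : Set (FG × FG) := {q | q.1 * q.2⁻¹ ∈ Gk k}

/-- Entourages of the uniform structure on `X = G` generated by `{E_k}_{k ≥ 1}`. -/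
def EntFG (S : Set (FG × FG)) : Prop := ∃ k, 1 ≤ k ∧ Ek k ⊆ S

/-- `G_F` for the left multiplication action of `G` on itself:
the subgroup generated by `S_F = {h | (x, h·x) ∈ F for some x}`. -/
def GFfg (F : Set (FG × FG)) : Subgroup FG :=
  Subgroup.closure {h : FG | ∃ x : FG, (x, h * x) ∈ F}

lemma GFfg_Ek (k : ℕ) : GFfg (Ek k) = Gk k := by
  have hset : {h : FG | ∃ x : FG, (x, h * x) ∈ Ek k} = (Gk k : Set FG) := by
    ext h
    constructor
    · rintro ⟨x, hx⟩
      have : x * (h * x)⁻¹ ∈ Gk k := hx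
      have hx' : x * (h * x)⁻¹ = h⁻¹ := by group
      rw [hx'] at this
      simpa using (Gk k).inv_mem this
    · intro hh
      refine ⟨1, ?_⟩
      show (1 : FG) * (h * 1)⁻¹ ∈ Gk k
      have : (1 : FG) * (h * 1)⁻¹ = h⁻¹ := by group
      rw [this]
      exact (Gk k).inv_mem hh
  rw [GFfg, hset, Subgroup.closure_eq]

/-- The auxiliary map to permutations. -/
noncomputable def φperm : FG →* Equiv.Perm (Fin 3) :=
  FreeGroup.lift (fun n => if n = 0 then Equiv.swap 0 1 else Equiv.swap 1 2)

lemma φperm_mem (g : FG) (hg : g ∈ Gk 1) :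
    φperm g ∈ MulAction.stabilizer (Equiv.Perm (Fin 3)) (0 : Fin 3) := by
  have hle : Gk 1 ≤ Subgroup.comap φperm
      (MulAction.stabilizer (Equiv.Perm (Fin 3)) (0 : Fin 3)) := by
    rw [Gk, Subgroup.closure_le]
    rintro g ⟨n, hn, rfl⟩
    have : φperm (FreeGroup.of n) = Equiv.swap 1 2 := by
      rw [φperm, FreeGroup.lift_apply_of, if_neg (by omega)]
    show φperm (FreeGroup.of n) ∈ MulAction.stabilizer (Equiv.Perm (Fin 3)) (0 : Fin 3)
    rw [this, MulAction.mem_stabilizer_iff, Equiv.Perm.smul_def]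
    decide
  exact hle hg

/-- The left multiplication action of the free group `G` on `X = G` with the uniform
structure generated by the `E_k` is small scale uniformly equicontinuous, but not
equicontinuous. -/
theorem stmt12 :
    (∀ S : Set (FG × FG), EntFG S → ∃ T : Set (FG × FG), EntFG T ∧
        ∀ g ∈ GFfg T, ∀ x y : FG, (x, y) ∈ T → (g * x, g * y) ∈ S) ∧
    ¬ (∀ S : Set (FG × FG), EntFG S → ∃ T : Set (FG × FG), EntFG T ∧
        ∀ (g x y : FG), (x, y) ∈ T → (g * x, g * y) ∈ S) := by
  constructor
  · rintro S ⟨k, hk, hsub⟩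
    refine ⟨Ek k, ⟨k, hk, subset_rfl⟩, ?_⟩
    intro g hg x y hxy
    rw [GFfg_Ek] at hg
    apply hsub
    show (g * x) * (g * y)⁻¹ ∈ Gk k
    have h1 : (g * x) * (g * y)⁻¹ = g * (x * y⁻¹) * g⁻¹ := by group
    rw [h1]
    exact (Gk k).mul_mem ((Gk k).mul_mem hg hxy) ((Gk k).inv_mem hg)
  · intro h
    obtain ⟨T, ⟨k, hk, hTsub⟩, hT⟩ := h (Ek 1) ⟨1, le_refl 1, subset_rfl⟩
    have hxy : (FreeGroup.of k, (1 : FG)) ∈ T := by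
      apply hTsub
      show FreeGroup.of k * (1 : FG)⁻¹ ∈ Gk k
      rw [inv_one, mul_one]
      exact Subgroup.subset_closure ⟨k, le_refl k, rfl⟩
    have hc := hT (FreeGroup.of 0) (FreeGroup.of k) 1 hxy
    have hc' : FreeGroup.of 0 * FreeGroup.of k * (FreeGroup.of 0)⁻¹ ∈ Gk 1 := by
      have : (FreeGroup.of 0 * FreeGroup.of k) * (FreeGroup.of 0 * (1:FG))⁻¹
          = FreeGroup.of 0 * FreeGroup.of k * (FreeGroup.of 0)⁻¹ := by group
      rw [← this]
      exact hc
    have hmem := φperm_mem _ hc'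
    rw [MulAction.mem_stabilizer_iff] at hmem
    have hφ : φperm (FreeGroup.of 0 * FreeGroup.of k * (FreeGroup.of 0)⁻¹)
        = Equiv.swap 0 1 * Equiv.swap 1 2 * (Equiv.swap 0 1)⁻¹ := by
      rw [map_mul, map_mul, map_inv, φperm, FreeGroup.lift_apply_of, FreeGroup.lift_apply_of,
        if_pos rfl, if_neg (by omega)]
    rw [hφ, Equiv.Perm.smul_def] at hmem
    revert hmem
    decide
end
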